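/- arXiv:1710.07074 — 4 statements merged into one kernel-verified Lean document; each statement's English description precedes it below -/
import Mathlib

section
/- Nilpotency of the N=(1,1) differential (Proposition 3.8, differential part). In the Clifford model, if the derivations pairwise commute (∂_j∘∂_r = ∂_r∘∂_j for all j, r), then the operator d := (1/2)(𝔇 − i𝔇̄) satisfies d∘d = 0 as a ℂ-linear endomorphism of A ⊗_ℂ ℂ^N ⊗_ℂ ℂ^N. -/
open scoped TensorProduct


/-- Shortcut instance to help instance search on the nested tensor product. -/
noncomputable instance tensorAddCommGroup {A : Type*} [Ring A] [Algebra ℂ A] {N : ℕ} :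
    AddCommGroup (A ⊗[ℂ] ((Fin N → ℂ) ⊗[ℂ] (Fin N → ℂ))) :=
  TensorProduct.addCommGroup

/-- The operator `∂ ⊗ M ⊗ M′` on `A ⊗ ℂ^N ⊗ ℂ^N` induced by a ℂ-linear map
`∂ : A → A` and `N × N` complex matrices `M`, `M′`. -/
noncomputable def cliffOp {A : Type*} [Ring A] [Algebra ℂ A] {N : ℕ}
    (p : A →ₗ[ℂ] A) (M M' : Matrix (Fin N) (Fin N) ℂ) :
    A ⊗[ℂ] ((Fin N → ℂ) ⊗[ℂ] (Fin N → ℂ)) →ₗ[ℂ]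
      A ⊗[ℂ] ((Fin N → ℂ) ⊗[ℂ] (Fin N → ℂ)) :=
  TensorProduct.map p (TensorProduct.map M.mulVecLin M'.mulVecLin)

section Aux

variable {A : Type*} [Ring A] [Algebra ℂ A] {N : ℕ}

lemma cliffOp_mul (p q : A →ₗ[ℂ] A) (M M' P Q : Matrix (Fin N) (Fin N) ℂ) :
    cliffOp p M M' * cliffOp q P Q = cliffOp (p ∘ₗ q) (M * P) (M' * Q) := by
  show (cliffOp p M M') ∘ₗ (cliffOp q P Q) = _
  simp only [cliffOp, ← TensorProduct.map_comp, Matrix.mulVecLin_mul]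

lemma cliffOp_add_right (p : A →ₗ[ℂ] A) (M X Y : Matrix (Fin N) (Fin N) ℂ) :
    cliffOp p M (X + Y) = cliffOp p M X + cliffOp p M Y := by
  simp only [cliffOp, Matrix.mulVecLin_add, TensorProduct.map_add_right]

lemma cliffOp_add_left (p : A →ₗ[ℂ] A) (X Y M : Matrix (Fin N) (Fin N) ℂ) :
    cliffOp p (X + Y) M = cliffOp p X M + cliffOp p Y M := by
  simp only [cliffOp, Matrix.mulVecLin_add, TensorProduct.map_add_left,
    TensorProduct.map_add_right]

lemma cliffOp_zero_right (p : A →ₗ[ℂ] A) (M : Matrix (Fin N) (Fin N) ℂ) :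
    cliffOp p M (0 : Matrix (Fin N) (Fin N) ℂ) = 0 := by
  simp only [cliffOp, Matrix.mulVecLin_zero, TensorProduct.map_zero_right]

lemma cliffOp_zero_left (p : A →ₗ[ℂ] A) (M : Matrix (Fin N) (Fin N) ℂ) :
    cliffOp p (0 : Matrix (Fin N) (Fin N) ℂ) M = 0 := by
  simp only [cliffOp, Matrix.mulVecLin_zero, TensorProduct.map_zero_left,
    TensorProduct.map_zero_right]

lemma cliffOp_smul_right (p : A →ₗ[ℂ] A) (c : ℂ) (M Q : Matrix (Fin N) (Fin N) ℂ) :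
    cliffOp p M (c • Q) = c • cliffOp p M Q := by
  have h : (c • Q).mulVecLin = c • Q.mulVecLin :=
    LinearMap.ext fun v => Matrix.smul_mulVec c Q v
  simp only [cliffOp, h, TensorProduct.map_smul_right]

lemma cliffOp_smul_left (p : A →ₗ[ℂ] A) (c : ℂ) (M Q : Matrix (Fin N) (Fin N) ℂ) :
    cliffOp p (c • M) Q = c • cliffOp p M Q := by
  have h : (c • M).mulVecLin = c • M.mulVecLin :=
    LinearMap.ext fun v => Matrix.smul_mulVec c M v
  simp only [cliffOp, h, TensorProduct.map_smul_left, TensorProduct.map_smul_right]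

end Aux

/-- Proposition 3.8 (differential part): if the derivations pairwise commute then
`d := (1/2)(𝔇 − i𝔇̄)` satisfies `d ∘ d = 0`. -/
theorem d_squared_zero
    {A : Type*} [Ring A] [Algebra ℂ A] {k N : ℕ}
    (par : Fin (2 * k) → (A →ₗ[ℂ] A))
    (hder : ∀ j (a b : A), par j (a * b) = par j a * b + a * par j b)
    (γ : Fin (2 * k) → Matrix (Fin N) (Fin N) ℂ)
    (hcl : ∀ j r, γ j * γ r + γ r * γ j =
      if j = r then (-2 : ℂ) • (1 : Matrix (Fin N) (Fin N) ℂ) else 0)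
    (σ : Matrix (Fin N) (Fin N) ℂ) (hσ : σ * σ = 1)
    (hσγ : ∀ j, σ * γ j + γ j * σ = 0)
    (ε' : ℂ) (hε : ε' = 1 ∨ ε' = -1)
    (D Dbar : A ⊗[ℂ] ((Fin N → ℂ) ⊗[ℂ] (Fin N → ℂ)) →ₗ[ℂ]
      A ⊗[ℂ] ((Fin N → ℂ) ⊗[ℂ] (Fin N → ℂ)))
    (hD : D = ∑ j, cliffOp (par j) 1 (γ j))
    (hDbar : Dbar = (-ε') • ∑ j, cliffOp (par j) (γ j) σ)
    (hcomm : ∀ j r, par j ∘ₗ par r = par r ∘ₗ par j)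
    (d : A ⊗[ℂ] ((Fin N → ℂ) ⊗[ℂ] (Fin N → ℂ)) →ₗ[ℂ]
      A ⊗[ℂ] ((Fin N → ℂ) ⊗[ℂ] (Fin N → ℂ)))
    (hd : d = (1 / 2 : ℂ) • (D - Complex.I • Dbar)) :
    d ∘ₗ d = 0 := by
  have hε2 : ε' * ε' = 1 := by rcases hε with h | h <;> simp [h]
  set S1 : A ⊗[ℂ] ((Fin N → ℂ) ⊗[ℂ] (Fin N → ℂ)) →ₗ[ℂ]
      A ⊗[ℂ] ((Fin N → ℂ) ⊗[ℂ] (Fin N → ℂ)) := ∑ j, cliffOp (par j) 1 (γ j) with hS1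
  set S2 : A ⊗[ℂ] ((Fin N → ℂ) ⊗[ℂ] (Fin N → ℂ)) →ₗ[ℂ]
      A ⊗[ℂ] ((Fin N → ℂ) ⊗[ℂ] (Fin N → ℂ)) := ∑ j, cliffOp (par j) (γ j) σ with hS2
  -- products of the basic sums
  have hS1S1 : S1 * S1 = ∑ j, ∑ r, cliffOp (par j ∘ₗ par r) 1 (γ j * γ r) := by
    rw [hS1, Finset.sum_mul_sum]
    refine Finset.sum_congr rfl fun j _ => Finset.sum_congr rfl fun r _ => ?_
    rw [cliffOp_mul, one_mul]
  have hS2S2 : S2 * S2 = ∑ j, ∑ r, cliffOp (par j ∘ₗ par r) (γ j * γ r) 1 := by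
    rw [hS2, Finset.sum_mul_sum]
    refine Finset.sum_congr rfl fun j _ => Finset.sum_congr rfl fun r _ => ?_
    rw [cliffOp_mul, hσ]
  have hS1S2 : S1 * S2 = ∑ j, ∑ r, cliffOp (par j ∘ₗ par r) (γ r) (γ j * σ) := by
    rw [hS1, hS2, Finset.sum_mul_sum]
    refine Finset.sum_congr rfl fun j _ => Finset.sum_congr rfl fun r _ => ?_
    rw [cliffOp_mul, one_mul]
  have hS2S1 : S2 * S1 = ∑ j, ∑ r, cliffOp (par j ∘ₗ par r) (γ r) (σ * γ j) := by
    rw [hS2, hS1, Finset.sum_mul_sum, Finset.sum_comm]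
    refine Finset.sum_congr rfl fun j _ => Finset.sum_congr rfl fun r _ => ?_
    rw [cliffOp_mul, mul_one, hcomm]
  -- the two quadratic terms agree
  have key1 : S1 * S1 = S2 * S2 := by
    have h2 : ∀ (X : A ⊗[ℂ] ((Fin N → ℂ) ⊗[ℂ] (Fin N → ℂ)) →ₗ[ℂ]
        A ⊗[ℂ] ((Fin N → ℂ) ⊗[ℂ] (Fin N → ℂ))), (2 : ℂ) • X = X + X := fun X => two_smul ℂ X
    suffices h22 : (2 : ℂ) • (S1 * S1) = (2 : ℂ) • (S2 * S2) by
      have := congrArg (fun x => (2 : ℂ)⁻¹ • x) h22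
      simpa [smul_smul] using this
    have e1 : (2 : ℂ) • (S1 * S1)
        = ∑ j, ∑ r, cliffOp (par j ∘ₗ par r) 1 (γ j * γ r + γ r * γ j) := by
      have swap : S1 * S1 = ∑ j, ∑ r, cliffOp (par j ∘ₗ par r) 1 (γ r * γ j) := by
        rw [hS1S1, Finset.sum_comm]
        exact Finset.sum_congr rfl fun j _ => Finset.sum_congr rfl fun r _ => by rw [hcomm]
      rw [h2]
      nth_rewrite 2 [swap]
      rw [hS1S1, ← Finset.sum_add_distrib]
      refine Finset.sum_congr rfl fun j _ => ?_
      rw [← Finset.sum_add_distrib]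
      exact Finset.sum_congr rfl fun r _ => (cliffOp_add_right _ _ _ _).symm
    have e2 : (2 : ℂ) • (S2 * S2)
        = ∑ j, ∑ r, cliffOp (par j ∘ₗ par r) (γ j * γ r + γ r * γ j) 1 := by
      have swap : S2 * S2 = ∑ j, ∑ r, cliffOp (par j ∘ₗ par r) (γ r * γ j) 1 := by
        rw [hS2S2, Finset.sum_comm]
        exact Finset.sum_congr rfl fun j _ => Finset.sum_congr rfl fun r _ => by rw [hcomm]
      rw [h2]
      nth_rewrite 2 [swap]
      rw [hS2S2, ← Finset.sum_add_distrib]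
      refine Finset.sum_congr rfl fun j _ => ?_
      rw [← Finset.sum_add_distrib]
      exact Finset.sum_congr rfl fun r _ => (cliffOp_add_left _ _ _ _).symm
    rw [e1, e2]
    refine Finset.sum_congr rfl fun j _ => Finset.sum_congr rfl fun r _ => ?_
    by_cases h : j = r
    · subst h
      have hdiag := hcl j j
      rw [if_pos rfl] at hdiag
      rw [hdiag, cliffOp_smul_right, cliffOp_smul_left]
    · have hoff := hcl j r
      rw [if_neg h] at hoff
      rw [hoff, cliffOp_zero_right, cliffOp_zero_left]
  -- the cross terms cancel
  have key2 : S1 * S2 + S2 * S1 = 0 := by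
    rw [hS1S2, hS2S1, ← Finset.sum_add_distrib]
    refine Finset.sum_eq_zero fun j _ => ?_
    rw [← Finset.sum_add_distrib]
    refine Finset.sum_eq_zero fun r _ => ?_
    rw [← cliffOp_add_right]
    have : γ j * σ + σ * γ j = 0 := by
      have := hσγ j; linear_combination (norm := module) this
    rw [this, cliffOp_zero_right]
  -- expand d ∘ d
  have hk2 : S2 * S1 = -(S1 * S2) := by
    have := key2
    linear_combination (norm := abel) this
  have hd2 : d ∘ₗ d = d * d := rfl
  rw [hd2, hd, hD, hDbar]
  simp only [sub_mul, mul_sub, smul_mul_assoc, mul_smul_comm, smul_smul, smul_sub]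
  rw [key1, hk2]
  match_scalars
  · linear_combination (Complex.I ^ 2 / 4) * hε2 + (1 / 4 : ℂ) * Complex.I_sq
  · ring
end

section
/- Proposition 3.10, algebraic core (construction of the Dolbeault differentials). Let R be a unital ℂ-algebra and let d, I ∈ R satisfy d² = 0 and [I,[I,d]] = −d (where [x,y] := xy − yx). Set d₂ := [I,d], ∂ := (1/2)(d − i d₂), and ∂̄ := (1/2)(d + i d₂). Then d₂² = 0, d d₂ + d₂ d = 0, ∂² = 0, ∂̄² = 0, ∂∂̄ + ∂̄∂ = 0, and ∂ + ∂̄ = d. -/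
/-- Proposition 3.10, algebraic core: if `d² = 0` and `[I,[I,d]] = −d`, then with
`d₂ := [I,d]`, `∂ := (1/2)(d − i d₂)` and `∂̄ := (1/2)(d + i d₂)` one has
`d₂² = 0`, `{d,d₂} = 0`, `∂² = ∂̄² = 0`, `{∂,∂̄} = 0`, and `∂ + ∂̄ = d`. -/
theorem dolbeault_differentials {R : Type*} [Ring R] [Algebra ℂ R]
    (d I d₂ p q : R)
    (hd : d * d = 0)
    (hd₂ : d₂ = I * d - d * I)
    (hII : I * d₂ - d₂ * I = -d)
    (hp : p = (1 / 2 : ℂ) • (d - Complex.I • d₂))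
    (hq : q = (1 / 2 : ℂ) • (d + Complex.I • d₂)) :
    d₂ * d₂ = 0 ∧ d * d₂ + d₂ * d = 0 ∧ p * p = 0 ∧ q * q = 0 ∧
      p * q + q * p = 0 ∧ p + q = d := by
  have h1 : d * d₂ + d₂ * d = 0 := by
    rw [hd₂]
    calc d * (I * d - d * I) + (I * d - d * I) * d
        = I * (d * d) - (d * d) * I := by noncomm_ring
      _ = 0 := by rw [hd]; noncomm_ring
  have h1' : d₂ * d = -(d * d₂) := by linear_combination (norm := noncomm_ring) h1
  have hId₂ : I * d₂ = d₂ * I - d := by linear_combination (norm := noncomm_ring) hII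
  have e1 : d₂ * d₂ = I * (d * d₂) - (d * d₂) * I := by
    calc d₂ * d₂ = (I * d - d * I) * d₂ := by rw [← hd₂]
      _ = I * (d * d₂) - d * (I * d₂) := by noncomm_ring
      _ = I * (d * d₂) - d * (d₂ * I - d) := by rw [hId₂]
      _ = I * (d * d₂) - (d * d₂) * I + d * d := by noncomm_ring
      _ = I * (d * d₂) - (d * d₂) * I := by rw [hd]; noncomm_ring
  have e2 : d₂ * d₂ = -(I * (d * d₂) - (d * d₂) * I) := by
    calc d₂ * d₂ = d₂ * (I * d - d * I) := by rw [← hd₂]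
      _ = (d₂ * I) * d - (d₂ * d) * I := by noncomm_ring
      _ = (I * d₂ + d) * d - (-(d * d₂)) * I := by
          rw [h1']; congr 1; rw [hId₂]; noncomm_ring
      _ = I * (d₂ * d) + d * d + (d * d₂) * I := by noncomm_ring
      _ = I * (-(d * d₂)) + 0 + (d * d₂) * I := by rw [h1', hd]
      _ = -(I * (d * d₂) - (d * d₂) * I) := by noncomm_ring
  have h2 : d₂ * d₂ = 0 := by
    have h : d₂ * d₂ + d₂ * d₂ = 0 := by
      nth_rewrite 1 [e1]
      rw [e2]; noncomm_ring
    have h' : (2 : ℂ) • (d₂ * d₂) = 0 := by rw [two_smul]; exact h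
    have := congrArg (fun x => ((2 : ℂ)⁻¹) • x) h'
    simpa [smul_smul] using this
  have hX : (d - Complex.I • d₂) * (d - Complex.I • d₂) = 0 := by
    simp only [sub_mul, mul_sub, smul_mul_assoc, mul_smul_comm, smul_smul, hd, h2, h1',
      smul_neg, smul_zero, neg_neg, zero_sub, sub_neg_eq_add, sub_zero]
    simp
  have hY : (d + Complex.I • d₂) * (d + Complex.I • d₂) = 0 := by
    simp only [add_mul, mul_add, smul_mul_assoc, mul_smul_comm, smul_smul, hd, h2, h1',
      smul_neg, smul_zero, neg_neg, zero_add, add_zero]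
    abel
  have hZ : (d - Complex.I • d₂) * (d + Complex.I • d₂)
      + (d + Complex.I • d₂) * (d - Complex.I • d₂) = 0 := by
    simp only [add_mul, mul_add, sub_mul, mul_sub, smul_mul_assoc, mul_smul_comm, smul_smul,
      hd, h2, h1', smul_neg, smul_zero, neg_neg, zero_add, add_zero, zero_sub, sub_neg_eq_add,
      sub_zero]
    abel
  refine ⟨h2, h1, ?_, ?_, ?_, ?_⟩
  · rw [hp, smul_mul_smul_comm, hX, smul_zero]
  · rw [hq, smul_mul_smul_comm, hY, smul_zero]
  · rw [hp, hq, smul_mul_smul_comm, smul_mul_smul_comm, ← smul_add, hZ, smul_zero]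
  · rw [hp, hq, ← smul_add]
    have : d - Complex.I • d₂ + (d + Complex.I • d₂) = (2 : ℂ) • d := by
      rw [two_smul]; abel
    rw [this, smul_smul]; norm_num
end

section
/- Proposition 3.11 (criterion for the Kähler conditions). Let R be a unital ℂ-*-algebra and let d, I ∈ R with I* = −I and [I,[I,d]] = −d. Set d₂ := [I,d], ∂ := (1/2)(d − i d₂), and ∂̄ := (1/2)(d + i d₂). Then the Kähler conditions ∂∂̄* + ∂̄*∂ = 0, ∂̄∂* + ∂*∂̄ = 0, and ∂∂* + ∂*∂ = ∂̄∂̄* + ∂̄*∂̄ hold if and only if d d₂* + d₂* d = 0 and d* d₂ + d₂ d* = 0. -/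
private lemma smul_cancel {R : Type*} [AddCommGroup R] [Module ℂ R]
    (c : ℂ) (x : R) (hc : c ≠ 0) (h : c • x = 0) : x = 0 := by
  have := congrArg (fun y => c⁻¹ • y) h
  simpa [smul_smul, inv_mul_cancel₀ hc] using this

/-- Proposition 3.11: with `I* = −I`, `[I,[I,d]] = −d`, `d₂ = [I,d]`,
`∂ = (1/2)(d − i d₂)` and `∂̄ = (1/2)(d + i d₂)`, the Kähler conditions
`{∂,∂̄*} = {∂̄,∂*} = 0` and `{∂,∂*} = {∂̄,∂̄*}` hold if and only if
`{d,d₂*} = 0` and `{d*,d₂} = 0`. -/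
theorem kaehler_conditions_criterion {R : Type*} [Ring R] [Algebra ℂ R]
    [StarRing R] [StarModule ℂ R]
    (d I d₂ p q : R)
    (hI : star I = -I)
    (hd₂ : d₂ = I * d - d * I)
    (hII : I * d₂ - d₂ * I = -d)
    (hp : p = (1 / 2 : ℂ) • (d - Complex.I • d₂))
    (hq : q = (1 / 2 : ℂ) • (d + Complex.I • d₂)) :
    (p * star q + star q * p = 0 ∧ q * star p + star p * q = 0 ∧
        p * star p + star p * p = q * star q + star q * q) ↔
      (d * star d₂ + star d₂ * d = 0 ∧ star d * d₂ + d₂ * star d = 0) := by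
  set e := star d with he
  set f := star d₂ with hfdef
  set A := d * f + f * d with hA
  set B := e * d₂ + d₂ * e with hB
  have hhalf : star (1/2 : ℂ) = (1/2 : ℂ) := by norm_num
  have hf : f = I * e - e * I := by
    rw [hfdef, hd₂]; rw [star_sub, star_mul, star_mul, hI, ← he]; noncomm_ring
  have hsp : star p = (1/2:ℂ) • (e + Complex.I • f) := by
    rw [hp, star_smul, hhalf, star_sub, star_smul, Complex.star_def, Complex.conj_I, ← he, ← hfdef]
    module
  have hsq : star q = (1/2:ℂ) • (e - Complex.I • f) := by
    rw [hq, star_smul, hhalf, star_add, star_smul, Complex.star_def, Complex.conj_I, ← he, ← hfdef]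
    module
  set S := d * e + e * d - (d₂ * f + f * d₂) with hS
  have E1 : p * star q + star q * p
      = (1/4:ℂ) • S + (-(Complex.I)/4 : ℂ) • (A + B) := by
    rw [hp, hsq, hS, hA, hB]
    simp only [smul_add, smul_sub, add_mul, mul_add, sub_mul, mul_sub, smul_mul_assoc,
      mul_smul_comm, smul_smul]
    match_scalars <;> simp [Complex.I_sq] <;> ring_nf <;> simp [Complex.I_sq] <;> ring
  have E2 : q * star p + star p * q
      = (1/4:ℂ) • S + ((Complex.I)/4 : ℂ) • (A + B) := by
    rw [hq, hsp, hS, hA, hB]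
    simp only [smul_add, smul_sub, add_mul, mul_add, sub_mul, mul_sub, smul_mul_assoc,
      mul_smul_comm, smul_smul]
    match_scalars <;> simp [Complex.I_sq] <;> ring_nf <;> simp [Complex.I_sq] <;> ring
  have E3 : (p * star p + star p * p) - (q * star q + star q * q)
      = ((Complex.I)/2 : ℂ) • (A - B) := by
    rw [hsp, hsq, hp, hq, hA, hB]
    simp only [smul_add, smul_sub, add_mul, mul_add, sub_mul, mul_sub, smul_mul_assoc,
      mul_smul_comm, smul_smul]
    match_scalars <;> simp [Complex.I_sq] <;> ring_nf <;> simp [Complex.I_sq] <;> ring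
  have hc0 : d₂ * I - I * d₂ - d = 0 := by
    have : d₂ * I - I * d₂ = -(I * d₂ - d₂ * I) := by noncomm_ring
    rw [this, hII]; simp
  have Skey : S = B * I - I * B := by
    have key : (B * I - I * B) - S
        = e * (d₂ * I - I * d₂ - d) + (d₂ * I - I * d₂ - d) * e
          + d₂ * (f - (I * e - e * I)) + (f - (I * e - e * I)) * d₂ := by
      rw [hS, hB]; noncomm_ring
    rw [hc0, sub_eq_zero.mpr hf] at key
    simp only [mul_zero, zero_mul, add_zero, zero_add] at key
    exact (sub_eq_zero.mp key).symm
  constructor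
  · rintro ⟨H1, H2, H3⟩
    have hApB : A + B = 0 := by
      apply smul_cancel ((Complex.I)/2 : ℂ) _ (by simp [Complex.I_ne_zero])
      have h : (q * star p + star p * q) - (p * star q + star q * p)
          = ((Complex.I)/2 : ℂ) • (A + B) := by rw [E1, E2]; module
      rw [H1, H2] at h; rw [← h]; simp
    have hAmB : A - B = 0 := by
      apply smul_cancel ((Complex.I)/2 : ℂ) _ (by simp [Complex.I_ne_zero])
      rw [← E3, sub_eq_zero]; exact H3
    have hAe : A = 0 := by
      have : A = (1/2:ℂ) • (A + B) + (1/2:ℂ) • (A - B) := by module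
      rw [this, hApB, hAmB]; simp
    have hBe : B = 0 := by
      have : B = (1/2:ℂ) • (A + B) - (1/2:ℂ) • (A - B) := by module
      rw [this, hApB, hAmB]; simp
    exact ⟨hAe, hBe⟩
  · rintro ⟨hAe, hBe⟩
    have hSz : S = 0 := by rw [Skey, hBe]; simp
    refine ⟨?_, ?_, ?_⟩
    · rw [E1, hSz, hAe, hBe]; simp
    · rw [E2, hSz, hAe, hBe]; simp
    · rw [← sub_eq_zero, E3, hAe, hBe]; simp
end

section
/- Key identity in Theorem 3.12 (the complex structure operator). In the Clifford model, define Ĩ := (1/2) Σ_{ℓ=1, ℓ odd}^{2k−1} (1⊗(γ_ℓγ_{ℓ+1}) + (γ_ℓγ_{ℓ+1})⊗1), a ℂ-linear endomorphism of ℂ^N ⊗ ℂ^N, and let 𝓘 := 1⊗Ĩ be the induced endomorphism of A ⊗_ℂ ℂ^N ⊗_ℂ ℂ^N acting as the identity on the A factor. Then [𝓘,[𝓘,d]] = −d, where d := (1/2)(𝔇 − i𝔇̄) and [x,y] := x∘y − y∘x. -/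
open scoped TensorProduct

open scoped TensorProduct

section Helpers

variable {R : Type*} [CommRing R] {M N P Q : Type*} [AddCommGroup M] [AddCommGroup N]
  [AddCommGroup P] [AddCommGroup Q] [Module R M] [Module R N] [Module R P] [Module R Q]

lemma tmap_sub_right (f : M →ₗ[R] P) (g g' : N →ₗ[R] Q) :
    TensorProduct.map f (g - g') = TensorProduct.map f g - TensorProduct.map f g' := by
  apply TensorProduct.ext'
  intro x y
  simp [TensorProduct.tmul_sub]

lemma tmap_sub_left (f f' : M →ₗ[R] P) (g : N →ₗ[R] Q) :
    TensorProduct.map (f - f') g = TensorProduct.map f g - TensorProduct.map f' g := by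
  apply TensorProduct.ext'
  intro x y
  simp [TensorProduct.sub_tmul]

lemma tmap_neg_right (f : M →ₗ[R] P) (g : N →ₗ[R] Q) :
    TensorProduct.map f (-g) = -TensorProduct.map f g := by
  apply TensorProduct.ext'
  intro x y
  simp [TensorProduct.tmul_neg]

lemma tmap_zero_left (g : N →ₗ[R] Q) :
    TensorProduct.map (0 : M →ₗ[R] P) g = 0 := by
  apply TensorProduct.ext'
  intro x y
  simp

lemma tmap_zero_right (f : M →ₗ[R] P) :
    TensorProduct.map f (0 : N →ₗ[R] Q) = 0 := by
  apply TensorProduct.ext'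
  intro x y
  simp

end Helpers

namespace CliffProof

variable {N : ℕ}

noncomputable def E (M M' : Matrix (Fin N) (Fin N) ℂ) :
    ((Fin N → ℂ) ⊗[ℂ] (Fin N → ℂ)) →ₗ[ℂ] ((Fin N → ℂ) ⊗[ℂ] (Fin N → ℂ)) :=
  TensorProduct.map M.mulVecLin M'.mulVecLin

lemma mulVecLin_sub (M M' : Matrix (Fin N) (Fin N) ℂ) :
    (M - M').mulVecLin = M.mulVecLin - M'.mulVecLin := by
  apply LinearMap.ext
  intro v
  simp [Matrix.sub_mulVec]

lemma mulVecLin_neg (M : Matrix (Fin N) (Fin N) ℂ) :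
    (-M).mulVecLin = -M.mulVecLin := by
  apply LinearMap.ext
  intro v
  simp [Matrix.neg_mulVec]

lemma E_mul (M M' P Q : Matrix (Fin N) (Fin N) ℂ) :
    E M M' * E P Q = E (M * P) (M' * Q) := by
  simp only [Module.End.mul_eq_comp, E, Matrix.mulVecLin_mul]
  exact (TensorProduct.map_comp _ _ _ _).symm

lemma E_sub_right (M M' Q : Matrix (Fin N) (Fin N) ℂ) :
    E M (M' - Q) = E M M' - E M Q := by
  rw [E, mulVecLin_sub, tmap_sub_right]
  rfl

lemma E_sub_left (M P Q : Matrix (Fin N) (Fin N) ℂ) :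
    E (M - P) Q = E M Q - E P Q := by
  rw [E, mulVecLin_sub, tmap_sub_left]
  rfl

lemma E_add_right (M M' Q : Matrix (Fin N) (Fin N) ℂ) :
    E M (M' + Q) = E M M' + E M Q := by
  rw [E, Matrix.mulVecLin_add, TensorProduct.map_add_right]
  rfl

lemma E_add_left (M P Q : Matrix (Fin N) (Fin N) ℂ) :
    E (M + P) Q = E M Q + E P Q := by
  rw [E, Matrix.mulVecLin_add, TensorProduct.map_add_left]
  rfl

lemma E_neg_right (M Q : Matrix (Fin N) (Fin N) ℂ) :
    E M (-Q) = -E M Q := by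
  rw [E, mulVecLin_neg, tmap_neg_right]
  rfl

lemma E_neg_left (M Q : Matrix (Fin N) (Fin N) ℂ) :
    E (-M) Q = -E M Q := by
  rw [E, mulVecLin_neg]
  apply TensorProduct.ext'
  intro x y
  simp [E, TensorProduct.neg_tmul]

lemma E_zero_right (M : Matrix (Fin N) (Fin N) ℂ) : E M 0 = 0 := by
  rw [E, Matrix.mulVecLin_zero]
  exact tmap_zero_right _

lemma E_zero_left (M : Matrix (Fin N) (Fin N) ℂ) : E 0 M = 0 := by
  rw [E, Matrix.mulVecLin_zero]
  exact tmap_zero_left _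


noncomputable instance vTensorAddCommGroup {N : ℕ} :
    AddCommGroup ((Fin N → ℂ) ⊗[ℂ] (Fin N → ℂ)) :=
  TensorProduct.addCommGroup

section RingGen

variable {R : Type*} [Ring R]

lemma comm_of_anti (a b x : R) (ha : a * x = -(x * a)) (hb : b * x = -(x * b)) :
    (a * b) * x = x * (a * b) := by
  rw [mul_assoc, hb, mul_neg, ← mul_assoc, ha, neg_mul, neg_neg, mul_assoc]

lemma anti1 (a b : R) (h : b * a = -(a * b)) : (a * b) * a = -(a * (a * b)) := by
  rw [mul_assoc, h, mul_neg]

lemma anti2 (a b : R) (h : b * a = -(a * b)) : (a * b) * b = -(b * (a * b)) := by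
  have hb : b * (a * b) = -((a * b) * b) := by rw [← mul_assoc, h, neg_mul]
  rw [hb, neg_neg]

lemma sq_gen (a b : R) (ha : a * a = -1) (hb : b * b = -1) (h : b * a = -(a * b)) :
    (a * b) * (a * b) = -1 := by
  calc (a * b) * (a * b) = a * ((b * a) * b) := by rw [mul_assoc, ← mul_assoc b]
    _ = a * ((-(a * b)) * b) := by rw [h]
    _ = -(a * (a * (b * b))) := by rw [neg_mul, mul_neg, mul_assoc]
    _ = -(a * (a * (-1))) := by rw [hb]
    _ = -1 := by rw [mul_neg_one, mul_neg, ha, neg_neg]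

end RingGen

section Matrices

variable {k N : ℕ}

def qA (q : Fin k) : Fin (2 * k) := ⟨2 * q.1, by have h : q.1 + 1 ≤ k := q.isLt; linarith⟩
def qB (q : Fin k) : Fin (2 * k) := ⟨2 * q.1 + 1, by have h : q.1 + 1 ≤ k := q.isLt; linarith⟩
def pj (j : Fin (2 * k)) : Fin k := ⟨j.1 / 2, by have := j.isLt; omega⟩

variable (γ : Fin (2 * k) → Matrix (Fin N) (Fin N) ℂ)

noncomputable def cm (q : Fin k) : Matrix (Fin N) (Fin N) ℂ := γ (qA q) * γ (qB q)

variable (hcl : ∀ j r, γ j * γ r + γ r * γ j =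
    if j = r then (-2 : ℂ) • (1 : Matrix (Fin N) (Fin N) ℂ) else 0)

include hcl

lemma gsq (j : Fin (2 * k)) : γ j * γ j = -1 := by
  have h := hcl j j
  rw [if_pos rfl] at h
  have h2 : (2 : ℂ) • (γ j * γ j) = (-2 : ℂ) • (1 : Matrix (Fin N) (Fin N) ℂ) := by
    rw [two_smul]; exact h
  calc γ j * γ j = (1/2 : ℂ) • ((2 : ℂ) • (γ j * γ j)) := by rw [smul_smul]; norm_num
    _ = (1/2 : ℂ) • ((-2 : ℂ) • (1 : Matrix (Fin N) (Fin N) ℂ)) := by rw [h2]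
    _ = -1 := by rw [smul_smul]; norm_num

lemma gac (j r : Fin (2 * k)) (h : j ≠ r) : γ j * γ r = -(γ r * γ j) := by
  have h2 := hcl j r
  rw [if_neg h] at h2
  exact eq_neg_of_add_eq_zero_left h2

omit hcl in
lemma qA_ne_qB (q : Fin k) : qA q ≠ qB (k := k) q := by
  simp only [qA, qB, ne_eq, Fin.mk.injEq]
  omega

lemma hba (q : Fin k) : γ (qB q) * γ (qA q) = -(γ (qA q) * γ (qB q)) :=
  gac γ hcl _ _ (Ne.symm (qA_ne_qB q))

lemma c_comm_g (q : Fin k) (j : Fin (2 * k)) (h : j.1 / 2 ≠ q.1) :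
    cm γ q * γ j = γ j * cm γ q := by
  have hA : qA q ≠ j := by
    intro hh
    apply h
    have := congrArg Fin.val hh
    simp only [qA] at this
    omega
  have hB : qB q ≠ j := by
    intro hh
    apply h
    have := congrArg Fin.val hh
    simp only [qB] at this
    omega
  exact comm_of_anti _ _ _ (gac γ hcl _ _ hA) (gac γ hcl _ _ hB)

lemma c_anti (j : Fin (2 * k)) :
    cm γ (pj j) * γ j = -(γ j * cm γ (pj j)) := by
  set p := pj j with hp
  have hj : j = qA p ∨ j = qB p := by
    by_cases h2 : j.1 % 2 = 0
    · left; apply Fin.ext; simp only [qA, hp, pj]; omega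
    · right; apply Fin.ext; simp only [qB, hp, pj]; omega
  simp only [cm]
  rcases hj with hj | hj
  · rw [hj]; exact anti1 _ _ (hba γ hcl _)
  · rw [hj]; exact anti2 _ _ (hba γ hcl _)

lemma c_sq (q : Fin k) : cm γ q * cm γ q = -1 :=
  sq_gen _ _ (gsq γ hcl _) (gsq γ hcl _) (hba γ hcl q)

omit hcl in
lemma qA_div (q : Fin k) : (qA q : Fin (2*k)).1 / 2 = q.1 := by simp only [qA]; omega
omit hcl in
lemma qB_div (q : Fin k) : (qB q : Fin (2*k)).1 / 2 = q.1 := by simp only [qB]; omega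

lemma c_comm_c (q q' : Fin k) (h : q ≠ q') : cm γ q * cm γ q' = cm γ q' * cm γ q := by
  have h1 : (qA q').1 / 2 ≠ q.1 := by rw [qA_div]; exact fun hh => h (Fin.ext hh.symm)
  have h2 : (qB q').1 / 2 ≠ q.1 := by rw [qB_div]; exact fun hh => h (Fin.ext hh.symm)
  show cm γ q * (γ (qA q') * γ (qB q')) = (γ (qA q') * γ (qB q')) * cm γ q
  rw [← mul_assoc, c_comm_g γ hcl q _ h1, mul_assoc, c_comm_g γ hcl q _ h2, ← mul_assoc]

omit hcl in
lemma c_comm_σ (σ : Matrix (Fin N) (Fin N) ℂ) (hσγ : ∀ j, σ * γ j + γ j * σ = 0)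
    (q : Fin k) : cm γ q * σ = σ * cm γ q := by
  have s : ∀ j, γ j * σ = -(σ * γ j) := fun j => eq_neg_of_add_eq_zero_right (hσγ j)
  exact comm_of_anti _ _ _ (s _) (s _)

end Matrices


section VLevel

variable {k N : ℕ} (γ : Fin (2 * k) → Matrix (Fin N) (Fin N) ℂ)
  (Itil : ((Fin N → ℂ) ⊗[ℂ] (Fin N → ℂ)) →ₗ[ℂ] ((Fin N → ℂ) ⊗[ℂ] (Fin N → ℂ)))
  (hI : Itil = (1/2 : ℂ) • ∑ q : Fin k, (E 1 (cm γ q) + E (cm γ q) 1))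
  (hcl : ∀ j r, γ j * γ r + γ r * γ j =
    if j = r then (-2 : ℂ) • (1 : Matrix (Fin N) (Fin N) ℂ) else 0)

include hI

lemma brI (M M' : Matrix (Fin N) (Fin N) ℂ) :
    Itil * E M M' - E M M' * Itil
      = (1/2 : ℂ) • ∑ q : Fin k,
        (E M (cm γ q * M' - M' * cm γ q) + E (cm γ q * M - M * cm γ q) M') := by
  have hsum : (∑ q : Fin k, (E 1 (cm γ q) + E (cm γ q) 1) * E M M')
      - ∑ q : Fin k, E M M' * (E 1 (cm γ q) + E (cm γ q) 1)
      = ∑ q : Fin k, (E M (cm γ q * M' - M' * cm γ q) + E (cm γ q * M - M * cm γ q) M') := by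
    rw [← Finset.sum_sub_distrib]
    refine Finset.sum_congr rfl fun q _ => ?_
    rw [add_mul, mul_add, E_mul, E_mul, E_mul, E_mul]
    simp only [one_mul, mul_one]
    rw [E_sub_right, E_sub_left, sub_add_sub_comm]
  rw [hI, smul_mul_assoc, mul_smul_comm, Finset.sum_mul, Finset.mul_sum, ← hsum]
  module

include hcl

lemma key1 (j : Fin (2 * k)) :
    Itil * (Itil * E 1 (γ j) - E 1 (γ j) * Itil)
      - (Itil * E 1 (γ j) - E 1 (γ j) * Itil) * Itil = -(E 1 (γ j)) := by
  have hγc : γ j * cm γ (pj j) = -(cm γ (pj j) * γ j) := by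
    rw [c_anti γ hcl j, neg_neg]
  have e1 : cm γ (pj j) * (cm γ (pj j) * γ j) = -(γ j) := by
    rw [← mul_assoc, c_sq γ hcl, neg_one_mul]
  have e2 : (cm γ (pj j) * γ j) * cm γ (pj j) = γ j := by
    rw [mul_assoc, hγc, mul_neg, e1, neg_neg]
  have s1 : Itil * E 1 (γ j) - E 1 (γ j) * Itil = E 1 (cm γ (pj j) * γ j) := by
    rw [brI γ Itil hI]
    rw [Finset.sum_eq_single (pj j)
      (fun q _ hq => by
        have hcq : cm γ q * γ j = γ j * cm γ q :=
          c_comm_g γ hcl q j (fun hh => hq (Fin.ext hh.symm))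
        rw [hcq, sub_self, mul_one, one_mul, sub_self, E_zero_right, E_zero_left, add_zero])
      (fun h => absurd (Finset.mem_univ _) h)]
    rw [hγc, sub_neg_eq_add, mul_one, one_mul, sub_self, E_zero_left, add_zero, E_add_right,
      ← two_smul ℂ, smul_smul]
    norm_num
  have s2 : Itil * E 1 (cm γ (pj j) * γ j) - E 1 (cm γ (pj j) * γ j) * Itil = -(E 1 (γ j)) := by
    rw [brI γ Itil hI]
    rw [Finset.sum_eq_single (pj j)
      (fun q _ hq => by
        have hdiv : j.1 / 2 ≠ q.1 := fun hh => hq (Fin.ext hh.symm)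
        have hcc : cm γ q * (cm γ (pj j) * γ j) = (cm γ (pj j) * γ j) * cm γ q := by
          rw [← mul_assoc, c_comm_c γ hcl q (pj j) (fun hh => hq hh), mul_assoc,
            c_comm_g γ hcl q j hdiv, ← mul_assoc]
        rw [hcc, sub_self, mul_one, one_mul, sub_self, E_zero_right, E_zero_left, add_zero])
      (fun h => absurd (Finset.mem_univ _) h)]
    rw [e1, e2, mul_one, one_mul, sub_self, E_zero_left, add_zero, E_sub_right, E_neg_right]
    module
  rw [s1, s2]

lemma key2 (σ : Matrix (Fin N) (Fin N) ℂ) (hσγ : ∀ j, σ * γ j + γ j * σ = 0)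
    (j : Fin (2 * k)) :
    Itil * (Itil * E (γ j) σ - E (γ j) σ * Itil)
      - (Itil * E (γ j) σ - E (γ j) σ * Itil) * Itil = -(E (γ j) σ) := by
  have hγc : γ j * cm γ (pj j) = -(cm γ (pj j) * γ j) := by
    rw [c_anti γ hcl j, neg_neg]
  have e1 : cm γ (pj j) * (cm γ (pj j) * γ j) = -(γ j) := by
    rw [← mul_assoc, c_sq γ hcl, neg_one_mul]
  have e2 : (cm γ (pj j) * γ j) * cm γ (pj j) = γ j := by
    rw [mul_assoc, hγc, mul_neg, e1, neg_neg]
  have s1 : Itil * E (γ j) σ - E (γ j) σ * Itil = E (cm γ (pj j) * γ j) σ := by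
    rw [brI γ Itil hI]
    rw [Finset.sum_eq_single (pj j)
      (fun q _ hq => by
        have hcq : cm γ q * γ j = γ j * cm γ q :=
          c_comm_g γ hcl q j (fun hh => hq (Fin.ext hh.symm))
        rw [hcq, sub_self, c_comm_σ γ σ hσγ q, sub_self, E_zero_right, E_zero_left, add_zero])
      (fun h => absurd (Finset.mem_univ _) h)]
    rw [hγc, sub_neg_eq_add, c_comm_σ γ σ hσγ, sub_self, E_zero_right, zero_add, E_add_left,
      ← two_smul ℂ, smul_smul]
    norm_num
  have s2 : Itil * E (cm γ (pj j) * γ j) σ - E (cm γ (pj j) * γ j) σ * Itil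
      = -(E (γ j) σ) := by
    rw [brI γ Itil hI]
    rw [Finset.sum_eq_single (pj j)
      (fun q _ hq => by
        have hdiv : j.1 / 2 ≠ q.1 := fun hh => hq (Fin.ext hh.symm)
        have hcc : cm γ q * (cm γ (pj j) * γ j) = (cm γ (pj j) * γ j) * cm γ q := by
          rw [← mul_assoc, c_comm_c γ hcl q (pj j) (fun hh => hq hh), mul_assoc,
            c_comm_g γ hcl q j hdiv, ← mul_assoc]
        rw [hcc, sub_self, c_comm_σ γ σ hσγ q, sub_self, E_zero_right, E_zero_left, add_zero])
      (fun h => absurd (Finset.mem_univ _) h)]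
    rw [e1, e2, c_comm_σ γ σ hσγ, sub_self, E_zero_right, zero_add, E_sub_left, E_neg_left]
    module
  rw [s1, s2]

end VLevel

end CliffProof

/-- The commutator-with-`Iop` operator, as a linear map on endomorphisms. -/
noncomputable def cliffBra {A : Type*} [Ring A] [Algebra ℂ A] {N : ℕ}
    (Iop : A ⊗[ℂ] ((Fin N → ℂ) ⊗[ℂ] (Fin N → ℂ)) →ₗ[ℂ]
      A ⊗[ℂ] ((Fin N → ℂ) ⊗[ℂ] (Fin N → ℂ))) :
    (A ⊗[ℂ] ((Fin N → ℂ) ⊗[ℂ] (Fin N → ℂ)) →ₗ[ℂ] A ⊗[ℂ] ((Fin N → ℂ) ⊗[ℂ] (Fin N → ℂ))) →ₗ[ℂ]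
    (A ⊗[ℂ] ((Fin N → ℂ) ⊗[ℂ] (Fin N → ℂ)) →ₗ[ℂ] A ⊗[ℂ] ((Fin N → ℂ) ⊗[ℂ] (Fin N → ℂ))) :=
  LinearMap.llcomp ℂ _ _ _ Iop - LinearMap.lcomp ℂ _ Iop

lemma cliffBra_apply {A : Type*} [Ring A] [Algebra ℂ A] {N : ℕ}
    (Iop X : A ⊗[ℂ] ((Fin N → ℂ) ⊗[ℂ] (Fin N → ℂ)) →ₗ[ℂ]
      A ⊗[ℂ] ((Fin N → ℂ) ⊗[ℂ] (Fin N → ℂ))) :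
    cliffBra Iop X = Iop ∘ₗ X - X ∘ₗ Iop := rfl
/-- Key identity in Theorem 3.12: with
`Ĩ = (1/2) Σ_{ℓ odd} (1 ⊗ γ_ℓγ_{ℓ+1} + γ_ℓγ_{ℓ+1} ⊗ 1)` and `𝓘 = 1 ⊗ Ĩ`,
one has `[𝓘,[𝓘,d]] = −d`. -/
theorem complex_structure_operator_identity {A : Type*} [Ring A] [Algebra ℂ A] {k N : ℕ}
    (par : Fin (2 * k) → (A →ₗ[ℂ] A))
    (hder : ∀ j (a b : A), par j (a * b) = par j a * b + a * par j b)
    (γ : Fin (2 * k) → Matrix (Fin N) (Fin N) ℂ)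
    (hcl : ∀ j r, γ j * γ r + γ r * γ j =
      if j = r then (-2 : ℂ) • (1 : Matrix (Fin N) (Fin N) ℂ) else 0)
    (σ : Matrix (Fin N) (Fin N) ℂ) (hσ : σ * σ = 1)
    (hσγ : ∀ j, σ * γ j + γ j * σ = 0)
    (ε' : ℂ) (hε : ε' = 1 ∨ ε' = -1)
    (D Dbar d : A ⊗[ℂ] ((Fin N → ℂ) ⊗[ℂ] (Fin N → ℂ)) →ₗ[ℂ]
      A ⊗[ℂ] ((Fin N → ℂ) ⊗[ℂ] (Fin N → ℂ)))
    (hD : D = ∑ j, cliffOp (par j) 1 (γ j))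
    (hDbar : Dbar = (-ε') • ∑ j, cliffOp (par j) (γ j) σ)
    (hd : d = (1 / 2 : ℂ) • (D - Complex.I • Dbar))
    (Itil : (Fin N → ℂ) ⊗[ℂ] (Fin N → ℂ) →ₗ[ℂ] (Fin N → ℂ) ⊗[ℂ] (Fin N → ℂ))
    (hItil : Itil = (1 / 2 : ℂ) • ∑ p : Fin k,
      (TensorProduct.map LinearMap.id
          (Matrix.mulVecLin (γ ⟨2 * p.1, by have := p.isLt; omega⟩ *
            γ ⟨2 * p.1 + 1, by have := p.isLt; omega⟩)) +
        TensorProduct.map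
          (Matrix.mulVecLin (γ ⟨2 * p.1, by have := p.isLt; omega⟩ *
            γ ⟨2 * p.1 + 1, by have := p.isLt; omega⟩)) LinearMap.id))
    (Iop : A ⊗[ℂ] ((Fin N → ℂ) ⊗[ℂ] (Fin N → ℂ)) →ₗ[ℂ]
      A ⊗[ℂ] ((Fin N → ℂ) ⊗[ℂ] (Fin N → ℂ)))
    (hIop : Iop = LinearMap.lTensor A Itil) :
    Iop ∘ₗ (Iop ∘ₗ d - d ∘ₗ Iop) - (Iop ∘ₗ d - d ∘ₗ Iop) ∘ₗ Iop = -d := by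
  classical
  have hI : Itil = (1/2 : ℂ) • ∑ q : Fin k,
      (CliffProof.E 1 (CliffProof.cm γ q) + CliffProof.E (CliffProof.cm γ q) 1) := by
    rw [hItil]
    congr 1
    refine Finset.sum_congr rfl fun q _ => ?_
    simp only [CliffProof.E, CliffProof.cm, CliffProof.qA, CliffProof.qB, Matrix.mulVecLin_one]
  have hcE : ∀ (p : A →ₗ[ℂ] A) (M M' : Matrix (Fin N) (Fin N) ℂ),
      cliffOp p M M' = TensorProduct.map p (CliffProof.E M M') := fun _ _ _ => rfl
  have lift : ∀ (p : A →ₗ[ℂ] A)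
      (S : ((Fin N → ℂ) ⊗[ℂ] (Fin N → ℂ)) →ₗ[ℂ] ((Fin N → ℂ) ⊗[ℂ] (Fin N → ℂ))),
      Iop ∘ₗ TensorProduct.map p S - TensorProduct.map p S ∘ₗ Iop
        = TensorProduct.map p (Itil * S - S * Itil) := by
    intro p S
    rw [hIop, LinearMap.lTensor_comp_map, LinearMap.map_comp_lTensor, ← tmap_sub_right]
    rfl
  have hBop : ∀ X, cliffBra Iop X = Iop ∘ₗ X - X ∘ₗ Iop := fun _ => rfl
  have dbl : ∀ (p : A →ₗ[ℂ] A)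
      (S : ((Fin N → ℂ) ⊗[ℂ] (Fin N → ℂ)) →ₗ[ℂ] ((Fin N → ℂ) ⊗[ℂ] (Fin N → ℂ))),
      cliffBra Iop (cliffBra Iop (TensorProduct.map p S))
        = TensorProduct.map p
            (Itil * (Itil * S - S * Itil) - (Itil * S - S * Itil) * Itil) := by
    intro p S
    rw [hBop, hBop, lift p S, lift p (Itil * S - S * Itil)]
  have k1' : ∀ j, cliffBra Iop (cliffBra Iop (cliffOp (par j) 1 (γ j)))
      = -(cliffOp (par j) 1 (γ j)) := by
    intro j
    rw [hcE, dbl (par j) (CliffProof.E 1 (γ j)), CliffProof.key1 γ Itil hI hcl j,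
      tmap_neg_right]
  have k2' : ∀ j, cliffBra Iop (cliffBra Iop (cliffOp (par j) (γ j) σ))
      = -(cliffOp (par j) (γ j) σ) := by
    intro j
    rw [hcE, dbl (par j) (CliffProof.E (γ j) σ), CliffProof.key2 γ Itil hI hcl σ hσγ j,
      tmap_neg_right]
  have bbD : cliffBra Iop (cliffBra Iop D) = -D := by
    calc cliffBra Iop (cliffBra Iop D)
        = ∑ j, cliffBra Iop (cliffBra Iop (cliffOp (par j) 1 (γ j))) := by
          rw [hD, map_sum, map_sum]
      _ = ∑ j, -(cliffOp (par j) 1 (γ j)) := Finset.sum_congr rfl fun j _ => k1' j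
      _ = -∑ j, cliffOp (par j) 1 (γ j) := Finset.sum_neg_distrib _
      _ = -D := by rw [hD]
  have bbDbar : cliffBra Iop (cliffBra Iop Dbar) = -Dbar := by
    calc cliffBra Iop (cliffBra Iop Dbar)
        = (-ε') • ∑ j, cliffBra Iop (cliffBra Iop (cliffOp (par j) (γ j) σ)) := by
          rw [hDbar, map_smul, map_smul, map_sum, map_sum]
      _ = (-ε') • ∑ j, -(cliffOp (par j) (γ j) σ) := by
          rw [Finset.sum_congr rfl fun j _ => k2' j]
      _ = -((-ε') • ∑ j, cliffOp (par j) (γ j) σ) := by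
          rw [Finset.sum_neg_distrib, smul_neg]
      _ = -Dbar := by rw [hDbar]
  rw [← hBop d, ← hBop (cliffBra Iop d), hd]
  simp only [map_smul, map_sub]
  rw [bbD, bbDbar]
  module
end
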